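/- Let X be a Banach space of Rademacher type q ∈ [1,2] with constant C_q. Let (Ω, 𝔽, ℙ) be a probability space and X₁, …, Xₙ : Ω → X independent random variables such that each ‖Xᵢ‖^q is integrable and each Xᵢ has mean zero (Bochner integral ∫ Xᵢ dℙ = 0). Then (∫ ‖Σᵢ₌₁ⁿ Xᵢ‖^q dℙ)^{1/q} ≤ 2·C_q·(Σᵢ₌₁ⁿ ∫ ‖Xᵢ‖^q dℙ)^{1/q}. -/

import Mathlib

open Finset MeasureTheory ProbabilityTheory

/-- Random sign combination `∑ i, εᵢ • xᵢ` of a finite sequence, where the signs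
are encoded by a Boolean vector (`true ↦ +1`, `false ↦ -1`). -/
noncomputable def signSum {E : Type*} [NormedAddCommGroup E] [NormedSpace ℝ E]
    {n : ℕ} (x : Fin n → E) (ε : Fin n → Bool) : E :=
  ∑ i, (if ε i then (1 : ℝ) else -1) • x i

/-! Symmetrization. On `μ.prod μ`, with `S = ∑ i, X i` and its independent copy `S'`, Jensen's
inequality and `𝔼 S' = 0` give `𝔼‖S‖^q ≤ 𝔼‖S - S'‖^q`. Independence makes the joint law of the
pairs `(X i, X' i)` a product, so swapping any of the pairs preserves it: the law of
`(X i - X' i)ᵢ` is invariant under every sign change. Hence `𝔼‖S - S'‖^q` is the average over signs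
of `𝔼‖∑ εᵢ (X i - X' i)‖^q`, which the type inequality bounds by `C^q ∑ 𝔼‖X i - X' i‖^q`, and
`‖a - b‖^q ≤ 2^(q-1) (‖a‖^q + ‖b‖^q)` finishes with the constant `(2C)^q`.
The sign invariance is proved for versions of the `X i` with values in a closed separable
subspace, where the Borel σ-algebra is that of a second-countable space. -/

open scoped ENNReal

def HasRademacherType (E : Type*) [NormedAddCommGroup E] [NormedSpace ℝ E] (q C : ℝ) : Prop :=
  ∀ (m : ℕ) (x : Fin m → E),
    ((∑ ε : Fin m → Bool, ‖signSum x ε‖ ^ q) / 2 ^ m) ^ (1 / q) ≤ C * (∑ i, ‖x i‖ ^ q) ^ (1 / q)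

section NormRpow

variable {Ω E : Type*} [MeasurableSpace Ω] {μ : Measure Ω} [NormedAddCommGroup E] {q : ℝ}

theorem ofReal_norm_rpow (x : E) (hq : 0 ≤ q) : ENNReal.ofReal (‖x‖ ^ q) = ‖x‖ₑ ^ q := by
  rw [← ENNReal.ofReal_rpow_of_nonneg (norm_nonneg x) hq, ofReal_norm]

theorem integral_norm_rpow_eq_toReal_lintegral {f : Ω → E} (hf : AEStronglyMeasurable f μ)
    (hq : 0 ≤ q) : ∫ ω, ‖f ω‖ ^ q ∂μ = (∫⁻ ω, ‖f ω‖ₑ ^ q ∂μ).toReal := by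
  rw [integral_eq_lintegral_of_nonneg_ae (ae_of_all _ fun ω => by positivity)
    (hf.norm.aemeasurable.pow_const q).aestronglyMeasurable]
  simp only [ofReal_norm_rpow _ hq]

theorem ofReal_integral_norm_rpow {f : Ω → E} (hf : Integrable (fun ω => ‖f ω‖ ^ q) μ)
    (hq : 0 ≤ q) : ENNReal.ofReal (∫ ω, ‖f ω‖ ^ q ∂μ) = ∫⁻ ω, ‖f ω‖ₑ ^ q ∂μ := by
  rw [ofReal_integral_eq_lintegral_ofReal hf (ae_of_all _ fun ω => by positivity)]
  simp only [ofReal_norm_rpow _ hq]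

end NormRpow

section signSum

variable {E F : Type*} [NormedAddCommGroup E] [NormedSpace ℝ E] [NormedAddCommGroup F]
  [NormedSpace ℝ F]

theorem map_signSum (L : E →L[ℝ] F) {n : ℕ} (x : Fin n → E) (ε : Fin n → Bool) :
    L (signSum x ε) = signSum (fun i => L (x i)) ε := by
  simp only [signSum, map_sum, map_smul]

theorem norm_signSum_const_one (v : E) (ε : Fin 1 → Bool) : ‖signSum (fun _ => v) ε‖ = ‖v‖ := by
  cases h : ε 0 <;> simp [signSum, h]

end signSum

namespace HasRademacherType

variable {E : Type*} [NormedAddCommGroup E] [NormedSpace ℝ E] {q C : ℝ}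

theorem one_le [Nontrivial E] (h : HasRademacherType E q C) (hq : 0 < q) : 1 ≤ C := by
  obtain ⟨v, hv⟩ := exists_ne (0 : E)
  have hsum : (∑ ε : Fin 1 → Bool, ‖signSum (fun _ => v) ε‖ ^ q) / 2 ^ 1 = ‖v‖ ^ q := by
    simp [norm_signSum_const_one]
  have := h 1 (fun _ => v)
  rw [hsum, Fin.sum_univ_one, ← Real.rpow_mul (norm_nonneg v), mul_one_div_cancel hq.ne',
    Real.rpow_one] at this
  exact (le_mul_iff_one_le_left (norm_pos_iff.2 hv)).1 this

theorem sum_norm_signSum_rpow_le (h : HasRademacherType E q C) (hq : 0 < q) (hC : 0 ≤ C)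
    {m : ℕ} (x : Fin m → E) :
    ∑ ε, ‖signSum x ε‖ ^ q ≤ 2 ^ m * C ^ q * ∑ i, ‖x i‖ ^ q := by
  have h2m : (0 : ℝ) < 2 ^ m := by positivity
  have hpow := Real.rpow_le_rpow (by positivity) (h m x) hq.le
  rw [Real.mul_rpow hC (by positivity), ← Real.rpow_mul (by positivity),
    ← Real.rpow_mul (by positivity), one_div_mul_cancel hq.ne', Real.rpow_one, Real.rpow_one,
    div_le_iff₀ h2m] at hpow
  linarith

theorem sum_enorm_signSum_rpow_le (h : HasRademacherType E q C) (hq : 0 < q) (hC : 0 ≤ C)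
    {m : ℕ} (x : Fin m → E) :
    ∑ ε, ‖signSum x ε‖ₑ ^ q ≤ 2 ^ m * ENNReal.ofReal (C ^ q) * ∑ i, ‖x i‖ₑ ^ q := by
  simp only [← ofReal_norm_rpow _ hq.le]
  rw [← ENNReal.ofReal_sum_of_nonneg fun _ _ => by positivity,
    ← ENNReal.ofReal_sum_of_nonneg fun _ _ => by positivity, ← ENNReal.ofReal_ofNat,
    ← ENNReal.ofReal_pow zero_le_two, ← ENNReal.ofReal_mul (by positivity),
    ← ENNReal.ofReal_mul (by positivity)]
  exact ENNReal.ofReal_le_ofReal (h.sum_norm_signSum_rpow_le hq hC x)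

end HasRademacherType

section Symmetrization

variable {Ω E : Type*} [MeasurableSpace Ω] {μ : Measure Ω} [NormedAddCommGroup E]

theorem rpow_lintegral_enorm_le_lintegral_enorm_rpow [IsProbabilityMeasure μ] {f : Ω → E}
    (hf : AEStronglyMeasurable f μ) {q : ℝ} (hq : 1 ≤ q) :
    (∫⁻ ω, ‖f ω‖ₑ ∂μ) ^ q ≤ ∫⁻ ω, ‖f ω‖ₑ ^ q ∂μ := by
  have hq0 : 0 < q := zero_lt_one.trans_le hq
  have h := eLpNorm'_le_eLpNorm'_of_exponent_le zero_lt_one hq μ hf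
  simp only [eLpNorm'_eq_lintegral_enorm, ENNReal.rpow_one, div_one] at h
  calc (∫⁻ ω, ‖f ω‖ₑ ∂μ) ^ q ≤ ((∫⁻ ω, ‖f ω‖ₑ ^ q ∂μ) ^ (1 / q)) ^ q := by gcongr
    _ = ∫⁻ ω, ‖f ω‖ₑ ^ q ∂μ := by
      rw [← ENNReal.rpow_mul, one_div_mul_cancel hq0.ne', ENNReal.rpow_one]

theorem lintegral_prod_enorm_sub_rpow_le [IsProbabilityMeasure μ] {f : Ω → E}
    (hf : AEStronglyMeasurable f μ) {q : ℝ} (hq : 1 ≤ q) :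
    ∫⁻ z, ‖f z.1 - f z.2‖ₑ ^ q ∂μ.prod μ ≤ 2 ^ q * ∫⁻ ω, ‖f ω‖ₑ ^ q ∂μ := by
  have hmarg : ∀ g : Ω × Ω → Ω, MeasurePreserving g (μ.prod μ) μ →
      ∫⁻ z, ‖f (g z)‖ₑ ^ q ∂μ.prod μ = ∫⁻ ω, ‖f ω‖ₑ ^ q ∂μ := fun g hg => by
    have hF : AEMeasurable (fun ω => ‖f ω‖ₑ ^ q) ((μ.prod μ).map g) := by
      rw [hg.map_eq]; exact hf.enorm.pow_const q
    rw [← lintegral_map' hF hg.measurable.aemeasurable, hg.map_eq]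
  calc ∫⁻ z, ‖f z.1 - f z.2‖ₑ ^ q ∂μ.prod μ
      ≤ ∫⁻ z, 2 ^ (q - 1) * (‖f z.1‖ₑ ^ q + ‖f z.2‖ₑ ^ q) ∂μ.prod μ := by
        refine lintegral_mono fun z => ?_
        calc ‖f z.1 - f z.2‖ₑ ^ q ≤ (‖f z.1‖ₑ + ‖f z.2‖ₑ) ^ q := by
              gcongr; exact enorm_sub_le
          _ ≤ _ := ENNReal.rpow_add_le_mul_rpow_add_rpow _ _ hq
    _ = 2 ^ (q - 1) * (2 * ∫⁻ ω, ‖f ω‖ₑ ^ q ∂μ) := by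
        rw [lintegral_const_mul' _ _ (by simp), lintegral_add_left' (hf.comp_fst.enorm.pow_const q),
          hmarg _ measurePreserving_fst, hmarg _ measurePreserving_snd, two_mul]
    _ = 2 ^ q * ∫⁻ ω, ‖f ω‖ₑ ^ q ∂μ := by
        nth_rw 2 [← ENNReal.rpow_one 2]
        rw [← mul_assoc, ← ENNReal.rpow_add _ _ two_ne_zero ENNReal.ofNat_ne_top, sub_add_cancel]

variable [NormedSpace ℝ E] [CompleteSpace E]

theorem lintegral_enorm_rpow_le_lintegral_prod_enorm_sub_rpow [IsProbabilityMeasure μ] {f : Ω → E}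
    (hf : Integrable f μ) (hf0 : ∫ ω, f ω ∂μ = 0) {q : ℝ} (hq : 1 ≤ q) :
    ∫⁻ ω, ‖f ω‖ₑ ^ q ∂μ ≤ ∫⁻ z, ‖f z.1 - f z.2‖ₑ ^ q ∂μ.prod μ := by
  have hq0 : 0 < q := zero_lt_one.trans_le hq
  have hpt (ω : Ω) : ‖f ω‖ₑ ^ q ≤ ∫⁻ ω', ‖f ω - f ω'‖ₑ ^ q ∂μ := by
    have hmean : ∫ ω', (f ω - f ω') ∂μ = f ω := by
      rw [integral_sub (integrable_const (f ω)) hf, hf0, integral_const, probReal_univ, one_smul,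
        sub_zero]
    calc ‖f ω‖ₑ ^ q ≤ (∫⁻ ω', ‖f ω - f ω'‖ₑ ∂μ) ^ q := by
          gcongr
          exact (congrArg enorm hmean).ge.trans (enorm_integral_le_lintegral_enorm _)
      _ ≤ _ := rpow_lintegral_enorm_le_lintegral_enorm_rpow (aestronglyMeasurable_const.sub hf.1) hq
  calc ∫⁻ ω, ‖f ω‖ₑ ^ q ∂μ ≤ ∫⁻ ω, ∫⁻ ω', ‖f ω - f ω'‖ₑ ^ q ∂μ ∂μ := lintegral_mono hpt
    _ = _ := (lintegral_prod _ ((hf.1.comp_fst.sub hf.1.comp_snd).enorm.pow_const q)).symm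

end Symmetrization

theorem HasRademacherType.sum_lintegral_enorm_signSum_rpow_le {E : Type*} [NormedAddCommGroup E]
    [NormedSpace ℝ E] {q C : ℝ} (h : HasRademacherType E q C) (hq : 0 < q) (hC : 0 ≤ C)
    {Ω : Type*} [MeasurableSpace Ω] {ν : Measure Ω} {n : ℕ} {Y : Fin n → Ω → E}
    (hY : ∀ i, AEStronglyMeasurable (Y i) ν) :
    ∑ ε, ∫⁻ z, ‖signSum (fun i => Y i z) ε‖ₑ ^ q ∂ν ≤
      2 ^ n * ENNReal.ofReal (C ^ q) * ∑ i, ∫⁻ z, ‖Y i z‖ₑ ^ q ∂ν := by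
  have hsign (ε : Fin n → Bool) :
      AEMeasurable (fun z => ‖signSum (fun i => Y i z) ε‖ₑ ^ q) ν :=
    (Finset.aestronglyMeasurable_fun_sum _ fun i _ => (hY i).const_smul _).enorm.pow_const q
  calc ∑ ε, ∫⁻ z, ‖signSum (fun i => Y i z) ε‖ₑ ^ q ∂ν
      = ∫⁻ z, ∑ ε, ‖signSum (fun i => Y i z) ε‖ₑ ^ q ∂ν :=
        (lintegral_finsetSum' _ fun ε _ => hsign ε).symm
    _ ≤ ∫⁻ z, 2 ^ n * ENNReal.ofReal (C ^ q) * ∑ i, ‖Y i z‖ₑ ^ q ∂ν :=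
        lintegral_mono fun z => h.sum_enorm_signSum_rpow_le hq hC _
    _ = 2 ^ n * ENNReal.ofReal (C ^ q) * ∑ i, ∫⁻ z, ‖Y i z‖ₑ ^ q ∂ν := by
        rw [lintegral_const_mul' _ _ (by finiteness),
          lintegral_finsetSum' _ fun i _ => (hY i).enorm.pow_const q]

section SignSymmetry

variable {Ω : Type*} [MeasurableSpace Ω] {μ : Measure Ω} [IsProbabilityMeasure μ]

theorem ProbabilityTheory.iIndepFun.measurePreserving_prod_pi {ι β : Type*} [Fintype ι]
    [MeasurableSpace β] {X : ι → Ω → β}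
    (hX : ∀ i, Measurable (X i)) (hind : iIndepFun X μ) :
    MeasurePreserving (fun z i => (X i z.1, X i z.2)) (μ.prod μ)
      (Measure.pi fun i => (μ.map (X i)).prod (μ.map (X i))) := by
  have hT : MeasurePreserving (fun ω i => X i ω) μ (Measure.pi fun i => μ.map (X i)) :=
    ⟨measurable_pi_lambda _ hX,
      (iIndepFun_iff_map_fun_eq_pi_map fun i => (hX i).aemeasurable).1 hind⟩
  exact (measurePreserving_arrowProdEquivProdArrow _ _ ι _ _).symm.comp (hT.prod hT)

theorem measurePreserving_pi_swap_ite {ι : Type*} [Fintype ι] {β : ι → Type*}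
    [∀ i, MeasurableSpace (β i)] (ν : ∀ i, Measure (β i)) [∀ i, SigmaFinite (ν i)]
    (c : ι → Bool) :
    MeasurePreserving (fun (y : ∀ i, β i × β i) i => if c i then y i else (y i).swap)
      (Measure.pi fun i => (ν i).prod (ν i)) (Measure.pi fun i => (ν i).prod (ν i)) := by
  refine measurePreserving_pi _ _ (f := fun i (z : β i × β i) => if c i then z else z.swap)
    fun i => ?_
  cases c i
  · exact Measure.measurePreserving_swap
  · exact MeasurePreserving.id _

variable {E : Type*} [NormedAddCommGroup E] [NormedSpace ℝ E] [MeasurableSpace E] [BorelSpace E]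

theorem ProbabilityTheory.iIndepFun.lintegral_signSum_sub_eq_of_measurable
    [SecondCountableTopology E] {n : ℕ} {X : Fin n → Ω → E} (hX : ∀ i, Measurable (X i))
    (hind : iIndepFun X μ) {G : E → ℝ≥0∞} (hG : Measurable G) (ε : Fin n → Bool) :
    ∫⁻ z, G (signSum (fun i => X i z.1 - X i z.2) ε) ∂μ.prod μ =
      ∫⁻ z, G (∑ i, (X i z.1 - X i z.2)) ∂μ.prod μ := by
  set H : (Fin n → E × E) → ℝ≥0∞ := fun y => G (∑ i, ((y i).1 - (y i).2))
  have hH : Measurable H := hG.comp <| Finset.measurable_sum _ fun i _ =>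
    (measurable_pi_apply i).fst.sub (measurable_pi_apply i).snd
  have hflip := measurePreserving_pi_swap_ite (fun i => μ.map (X i)) ε
  have hpair := hind.measurePreserving_prod_pi hX
  have hH_swap (y : Fin n → E × E) :
      H (fun i => if ε i then y i else (y i).swap) =
        G (signSum (fun i => (y i).1 - (y i).2) ε) := by
    simp only [H, signSum]
    congr 1
    refine Finset.sum_congr rfl fun i _ => ?_
    cases ε i <;> simp
  calc ∫⁻ z, G (signSum (fun i => X i z.1 - X i z.2) ε) ∂μ.prod μ
      = ∫⁻ z, H (fun i => if ε i then (X i z.1, X i z.2) else (X i z.1, X i z.2).swap)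
          ∂μ.prod μ := by simp only [hH_swap]
    _ = ∫⁻ y, H y ∂_ := by
        rw [hpair.lintegral_comp (f := fun y => H (fun i => if ε i then y i else (y i).swap))
          (hH.comp hflip.measurable), hflip.lintegral_comp hH]
    _ = ∫⁻ z, G (∑ i, (X i z.1 - X i z.2)) ∂μ.prod μ := (hpair.lintegral_comp hH).symm

theorem ProbabilityTheory.iIndepFun.lintegral_signSum_sub_eq {n : ℕ} {X : Fin n → Ω → E}
    (hX : ∀ i, AEStronglyMeasurable (X i) μ) (hind : iIndepFun X μ) {G : E → ℝ≥0∞}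
    (hG : Measurable G) (ε : Fin n → Bool) :
    ∫⁻ z, G (signSum (fun i => X i z.1 - X i z.2) ε) ∂μ.prod μ =
      ∫⁻ z, G (∑ i, (X i z.1 - X i z.2)) ∂μ.prod μ := by
  set Z := fun i => (hX i).mk (X i)
  have hZ (i : Fin n) : StronglyMeasurable (Z i) := (hX i).stronglyMeasurable_mk
  set K : Submodule ℝ E := (Submodule.span ℝ (⋃ i, Set.range (Z i))).topologicalClosure
  have hZK (i : Fin n) (ω : Ω) : Z i ω ∈ K := Submodule.le_topologicalClosure _
    (Submodule.subset_span (Set.mem_iUnion.2 ⟨i, ω, rfl⟩))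
  have hKsep : TopologicalSpace.IsSeparable (K : Set E) := by
    rw [Submodule.topologicalClosure_coe]
    exact (TopologicalSpace.IsSeparable.iUnion fun i => (hZ i).isSeparable_range).span.closure
  have : TopologicalSpace.SeparableSpace K := hKsep.separableSpace
  have : BorelSpace K := Subtype.borelSpace _
  set Z' : Fin n → Ω → K := fun i ω => ⟨Z i ω, hZK i ω⟩
  have hindZ' : iIndepFun Z' μ := by
    have hindZ : iIndepFun Z μ := hind.congr fun i => (hX i).ae_eq_mk
    rw [iIndepFun_iff_iIndep] at hindZ ⊢
    convert hindZ using 2 with i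
    exact MeasurableSpace.comap_comp
  have hZ'sum := hindZ'.lintegral_signSum_sub_eq_of_measurable
    (fun i => (hZ i).measurable.subtype_mk) (hG.comp measurable_subtype_coe) ε
  have hcoe (x : Fin n → K) : ((signSum x ε : K) : E) = signSum (fun i => (x i : E)) ε :=
    map_signSum K.subtypeL x ε
  simp only [Function.comp_apply, hcoe, Submodule.coe_sum, Submodule.coe_sub] at hZ'sum
  have hXZ : ∀ᵐ z ∂μ.prod μ, ∀ i, X i z.1 - X i z.2 = Z i z.1 - Z i z.2 := by
    have h1 := ae_all_iff.2 fun i =>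
      (Measure.quasiMeasurePreserving_fst (μ := μ) (ν := μ)).ae_eq (hX i).ae_eq_mk
    have h2 := ae_all_iff.2 fun i =>
      (Measure.quasiMeasurePreserving_snd (μ := μ) (ν := μ)).ae_eq (hX i).ae_eq_mk
    filter_upwards [h1, h2] with z h1 h2 i
    exact congrArg₂ _ (h1 i) (h2 i)
  calc _ = ∫⁻ z, G (signSum (fun i => Z i z.1 - Z i z.2) ε) ∂μ.prod μ :=
        lintegral_congr_ae (hXZ.mono fun z hz => by simp only [hz])
    _ = ∫⁻ z, G (∑ i, (Z i z.1 - Z i z.2)) ∂μ.prod μ := hZ'sum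
    _ = _ := lintegral_congr_ae (hXZ.mono fun z hz => by simp only [hz])

end SignSymmetry

section Main

variable {E : Type*} [NormedAddCommGroup E] [NormedSpace ℝ E] [MeasurableSpace E] [BorelSpace E]
  {q C : ℝ} {Ω : Type*} [MeasurableSpace Ω] {μ : Measure Ω} [IsProbabilityMeasure μ] {n : ℕ}
  {X : Fin n → Ω → E}

theorem HasRademacherType.lintegral_enorm_sum_sub_rpow_le (h : HasRademacherType E q C)
    (hq : 0 < q) (hC : 0 ≤ C) (hX : ∀ i, AEStronglyMeasurable (X i) μ) (hind : iIndepFun X μ) :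
    ∫⁻ z, ‖∑ i, (X i z.1 - X i z.2)‖ₑ ^ q ∂μ.prod μ ≤
      ENNReal.ofReal (C ^ q) * ∑ i, ∫⁻ z, ‖X i z.1 - X i z.2‖ₑ ^ q ∂μ.prod μ := by
  have hflip (ε : Fin n → Bool) :
      ∫⁻ z, ‖signSum (fun i => X i z.1 - X i z.2) ε‖ₑ ^ q ∂μ.prod μ =
        ∫⁻ z, ‖∑ i, (X i z.1 - X i z.2)‖ₑ ^ q ∂μ.prod μ :=
    hind.lintegral_signSum_sub_eq hX (G := fun x => ‖x‖ₑ ^ q) (by fun_prop) ε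
  rw [← ENNReal.mul_le_mul_iff_right (pow_ne_zero n two_ne_zero) (by finiteness), ← mul_assoc]
  calc 2 ^ n * ∫⁻ z, ‖∑ i, (X i z.1 - X i z.2)‖ₑ ^ q ∂μ.prod μ
      = ∑ ε : Fin n → Bool, ∫⁻ z, ‖signSum (fun i => X i z.1 - X i z.2) ε‖ₑ ^ q ∂μ.prod μ := by
        simp [hflip]
    _ ≤ _ := h.sum_lintegral_enorm_signSum_rpow_le hq hC fun i =>
        (hX i).comp_fst.sub (hX i).comp_snd

theorem HasRademacherType.lintegral_enorm_sum_rpow_le [CompleteSpace E]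
    (h : HasRademacherType E q C) (hq : 1 ≤ q) (hC : 0 ≤ C) (hint : ∀ i, Integrable (X i) μ)
    (hind : iIndepFun X μ) (hmean : ∀ i, ∫ ω, X i ω ∂μ = 0) :
    ∫⁻ ω, ‖∑ i, X i ω‖ₑ ^ q ∂μ ≤ ENNReal.ofReal ((2 * C) ^ q) * ∑ i, ∫⁻ ω, ‖X i ω‖ₑ ^ q ∂μ := by
  have hq0 : 0 < q := zero_lt_one.trans_le hq
  have hsum_mean : ∫ ω, ∑ i, X i ω ∂μ = 0 := by
    simp [integral_finsetSum _ fun i _ => hint i, hmean]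
  calc ∫⁻ ω, ‖∑ i, X i ω‖ₑ ^ q ∂μ
      ≤ ∫⁻ z, ‖∑ i, X i z.1 - ∑ i, X i z.2‖ₑ ^ q ∂μ.prod μ :=
        lintegral_enorm_rpow_le_lintegral_prod_enorm_sub_rpow
          (integrable_finsetSum _ fun i _ => hint i) hsum_mean hq
    _ = ∫⁻ z, ‖∑ i, (X i z.1 - X i z.2)‖ₑ ^ q ∂μ.prod μ := by simp only [Finset.sum_sub_distrib]
    _ ≤ ENNReal.ofReal (C ^ q) * ∑ i, ∫⁻ z, ‖X i z.1 - X i z.2‖ₑ ^ q ∂μ.prod μ :=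
        h.lintegral_enorm_sum_sub_rpow_le hq0 hC (fun i => (hint i).1) hind
    _ ≤ ENNReal.ofReal (C ^ q) * ∑ i, 2 ^ q * ∫⁻ ω, ‖X i ω‖ₑ ^ q ∂μ := by
        gcongr with i
        exact lintegral_prod_enorm_sub_rpow_le (hint i).1 hq
    _ = ENNReal.ofReal ((2 * C) ^ q) * ∑ i, ∫⁻ ω, ‖X i ω‖ₑ ^ q ∂μ := by
        rw [← Finset.mul_sum, ← mul_assoc, Real.mul_rpow zero_le_two hC,
          ENNReal.ofReal_mul (by positivity), ← ENNReal.ofReal_rpow_of_nonneg zero_le_two hq0.le,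
          ENNReal.ofReal_ofNat, mul_comm (2 ^ q)]

end Main

theorem rademacher_type_independent_sum_bound_general
    {E : Type*} [NormedAddCommGroup E] [NormedSpace ℝ E] [CompleteSpace E]
    [MeasurableSpace E] [BorelSpace E]
    (q Cq : ℝ) (hq1 : 1 ≤ q)
    (htype : ∀ (m : ℕ) (x : Fin m → E),
      ((∑ ε : Fin m → Bool, ‖signSum x ε‖ ^ q) / 2 ^ m) ^ (1 / q) ≤
        Cq * (∑ i, ‖x i‖ ^ q) ^ (1 / q))
    {Ω : Type*} [MeasurableSpace Ω] (μ : Measure Ω) [IsProbabilityMeasure μ]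
    (n : ℕ) (X : Fin n → Ω → E)
    (haesm : ∀ i, AEStronglyMeasurable (X i) μ)
    (hindep : iIndepFun (m := fun _ : Fin n => (inferInstance : MeasurableSpace E)) X μ)
    (hint : ∀ i, Integrable (fun ω => ‖X i ω‖ ^ q) μ)
    (hmean : ∀ i, ∫ ω, X i ω ∂μ = 0) :
    (∫ ω, ‖∑ i, X i ω‖ ^ q ∂μ) ^ (1 / q) ≤
      2 * Cq * (∑ i, ∫ ω, ‖X i ω‖ ^ q ∂μ) ^ (1 / q) := by
  have hq0 : 0 < q := zero_lt_one.trans_le hq1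
  rcases subsingleton_or_nontrivial E with hE | hE
  · simp [norm_of_subsingleton, Real.zero_rpow hq0.ne', Real.zero_rpow (inv_ne_zero hq0.ne')]
  have hC : 0 ≤ Cq := zero_le_one.trans (HasRademacherType.one_le htype hq0)
  have hXint (i : Fin n) : Integrable (X i) μ := by
    have := integrable_norm_rpow_of_le (haesm i) zero_le_one hq0.le hq1 (hint i)
    simpa only [Real.rpow_one, integrable_norm_iff (haesm i)] using this
  have hbound := HasRademacherType.lintegral_enorm_sum_rpow_le htype hq1 hC hXint hindep hmean
  rw [← Finset.sum_congr rfl fun i _ => ofReal_integral_norm_rpow (hint i) hq0.le,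
    ← ENNReal.ofReal_sum_of_nonneg fun i _ => by positivity,
    ← ENNReal.ofReal_mul (by positivity)] at hbound
  have hpow : ∫ ω, ‖∑ i, X i ω‖ ^ q ∂μ ≤ (2 * Cq) ^ q * ∑ i, ∫ ω, ‖X i ω‖ ^ q ∂μ := by
    rw [integral_norm_rpow_eq_toReal_lintegral
      (Finset.aestronglyMeasurable_fun_sum _ fun i _ => haesm i) hq0.le]
    exact ENNReal.toReal_le_of_le_ofReal (by positivity) hbound
  calc (∫ ω, ‖∑ i, X i ω‖ ^ q ∂μ) ^ (1 / q)
      ≤ ((2 * Cq) ^ q * ∑ i, ∫ ω, ‖X i ω‖ ^ q ∂μ) ^ (1 / q) := by gcongr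
    _ = 2 * Cq * (∑ i, ∫ ω, ‖X i ω‖ ^ q ∂μ) ^ (1 / q) := by
      rw [Real.mul_rpow (by positivity) (by positivity), ← Real.rpow_mul (by positivity),
        mul_one_div_cancel hq0.ne', Real.rpow_one]

/-- Ledoux–Talagrand, Proposition 9.11: in a Banach space of
Rademacher type `q ∈ [1,2]` with constant `C_q`, independent mean-zero random
variables `X₁,…,Xₙ` with `‖Xᵢ‖^q` integrable satisfy
`(E‖∑ Xᵢ‖^q)^(1/q) ≤ 2·C_q·(∑ E‖Xᵢ‖^q)^(1/q)`. -/
theorem rademacher_type_independent_sum_bound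
    {E : Type*} [NormedAddCommGroup E] [NormedSpace ℝ E] [CompleteSpace E]
    [MeasurableSpace E] [BorelSpace E]
    (q Cq : ℝ) (hq1 : 1 ≤ q) (hq2 : q ≤ 2)
    (htype : ∀ (m : ℕ) (x : Fin m → E),
      ((∑ ε : Fin m → Bool, ‖signSum x ε‖ ^ q) / 2 ^ m) ^ (1 / q) ≤
        Cq * (∑ i, ‖x i‖ ^ q) ^ (1 / q))
    {Ω : Type*} [MeasurableSpace Ω] (μ : Measure Ω) [IsProbabilityMeasure μ]
    (n : ℕ) (X : Fin n → Ω → E)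
    (hmeas : ∀ i, Measurable (X i))
    (haesm : ∀ i, AEStronglyMeasurable (X i) μ)
    (hindep : iIndepFun (m := fun _ : Fin n => (inferInstance : MeasurableSpace E)) X μ)
    (hint : ∀ i, Integrable (fun ω => ‖X i ω‖ ^ q) μ)
    (hmean : ∀ i, ∫ ω, X i ω ∂μ = 0) :
    (∫ ω, ‖∑ i, X i ω‖ ^ q ∂μ) ^ (1 / q) ≤
      2 * Cq * (∑ i, ∫ ω, ‖X i ω‖ ^ q ∂μ) ^ (1 / q) :=
  rademacher_type_independent_sum_bound_general q Cq hq1 htype μ n X haesm hindep hint hmean
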